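/- Fix integers m ≥ n+1 with n ≥ 2. For every nonzero a ∈ ℝ^{m−n} and every nonzero t ∈ ℝ, the following identity of (m+n)×(m+n) real matrices holds: w_{L_n}(a) · w_{L_{n−1}−L_n}(t) · w_{L_n}(a)⁻¹ = w_{L_{n−1}+L_n}(−(|a|²/2)·t). -/

import Mathlib

noncomputable section

open Matrix

/-- The `N × N` real matrix with `(k,l)` entry (1-based) equal to `1`
and all other entries `0`. -/
def Estd (N k l : ℕ) : Matrix (Fin N) (Fin N) ℝ :=
  Matrix.of fun p q => if p.val + 1 = k ∧ q.val + 1 = l then 1 else 0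

/-- `f_{L_i − L_j} = E_{i,j} − E_{j+n,i+n}` (1-based indices). -/
def fdiff (m n i j : ℕ) : Matrix (Fin (m + n)) (Fin (m + n)) ℝ :=
  Estd (m + n) i j - Estd (m + n) (j + n) (i + n)

/-- `f_{L_i + L_j} = E_{i,j+n} − E_{j,i+n}` (1-based indices, `i < j`). -/
def fplus (m n i j : ℕ) : Matrix (Fin (m + n)) (Fin (m + n)) ℝ :=
  Estd (m + n) i (j + n) - Estd (m + n) j (i + n)

/-- `f_{−L_i − L_j} = E_{j+n,i} − E_{i+n,j}` (1-based indices, `i < j`). -/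
def fnegplus (m n i j : ℕ) : Matrix (Fin (m + n)) (Fin (m + n)) ℝ :=
  Estd (m + n) (j + n) i - Estd (m + n) (i + n) j

/-- `x_{L_i − L_j}(t) = I + t f_{L_i−L_j}`. -/
def xdiff (m n i j : ℕ) (t : ℝ) : Matrix (Fin (m + n)) (Fin (m + n)) ℝ :=
  1 + t • fdiff m n i j

/-- `x_{L_i + L_j}(t) = I + t f_{L_i+L_j}`. -/
def xplus (m n i j : ℕ) (t : ℝ) : Matrix (Fin (m + n)) (Fin (m + n)) ℝ :=
  1 + t • fplus m n i j

/-- `x_{−L_i − L_j}(t) = I + t f_{−L_i−L_j}`. -/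
def xnegplus (m n i j : ℕ) (t : ℝ) : Matrix (Fin (m + n)) (Fin (m + n)) ℝ :=
  1 + t • fnegplus m n i j

/-- `w_{L_i−L_j}(t) = x_{L_i−L_j}(t) x_{L_j−L_i}(−t⁻¹) x_{L_i−L_j}(t)`. -/
def wdiff (m n i j : ℕ) (t : ℝ) : Matrix (Fin (m + n)) (Fin (m + n)) ℝ :=
  xdiff m n i j t * xdiff m n j i (-t⁻¹) * xdiff m n i j t

/-- `w_{L_i+L_j}(t) = x_{L_i+L_j}(t) x_{−L_i−L_j}(−t⁻¹) x_{L_i+L_j}(t)`. -/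
def wplus (m n i j : ℕ) (t : ℝ) : Matrix (Fin (m + n)) (Fin (m + n)) ℝ :=
  xplus m n i j t * xnegplus m n i j (-t⁻¹) * xplus m n i j t

/-- `f^ℓ_{L_i} = E_{i,2n+ℓ} − E_{2n+ℓ,i+n}` (1-based indices). -/
def fL (m n i ℓ : ℕ) : Matrix (Fin (m + n)) (Fin (m + n)) ℝ :=
  Estd (m + n) i (2 * n + ℓ) - Estd (m + n) (2 * n + ℓ) (i + n)

/-- `f^ℓ_{−L_i} = E_{i+n,2n+ℓ} − E_{2n+ℓ,i}` (1-based indices). -/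
def fnegL (m n i ℓ : ℕ) : Matrix (Fin (m + n)) (Fin (m + n)) ℝ :=
  Estd (m + n) (i + n) (2 * n + ℓ) - Estd (m + n) (2 * n + ℓ) i

/-- The squared Euclidean norm `|a|²` of `a ∈ ℝ^{m−n}`. -/
def sqnorm (d : ℕ) (a : Fin d → ℝ) : ℝ := ∑ ℓ, (a ℓ) ^ 2

/-- `x_{L_i}(a) = I + Σ_ℓ a_ℓ f^ℓ_{L_i} − (|a|²/2) E_{i,i+n}`. -/
def xL (m n i : ℕ) (a : Fin (m - n) → ℝ) : Matrix (Fin (m + n)) (Fin (m + n)) ℝ :=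
  1 + (∑ ℓ : Fin (m - n), a ℓ • fL m n i (ℓ.val + 1)) -
    (sqnorm (m - n) a / 2) • Estd (m + n) i (i + n)

/-- `x_{−L_i}(a) = I + Σ_ℓ a_ℓ f^ℓ_{−L_i} − (|a|²/2) E_{i+n,i}`. -/
def xnegL (m n i : ℕ) (a : Fin (m - n) → ℝ) : Matrix (Fin (m + n)) (Fin (m + n)) ℝ :=
  1 + (∑ ℓ : Fin (m - n), a ℓ • fnegL m n i (ℓ.val + 1)) -
    (sqnorm (m - n) a / 2) • Estd (m + n) (i + n) i

/-- `w_{L_i}(a) = x_{L_i}(a) · x_{−L_i}((2/|a|²)·a) · x_{L_i}(a)`. -/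
def wL (m n i : ℕ) (a : Fin (m - n) → ℝ) : Matrix (Fin (m + n)) (Fin (m + n)) ℝ :=
  xL m n i a * xnegL m n i ((2 / sqnorm (m - n) a) • a) * xL m n i a

/-!
Write `E(u, v) = u vᵀ`. Every matrix in the statement is a combination of `1` and outer products
of the basis vectors `e_{n-1}, e_n, e_{2n-1}, e_{2n}` and of the vector `α` carrying `a` in the
last `m - n` coordinates. These are orthonormal up to `α ⬝ α = |a|²`, so products are computed by
`E(u, v) E(w, x) = (v ⬝ w) E(u, x)`. In this form `w_{L_n}(a)` is the involution sending
`e_n ↦ -(2/|a|²) e_{2n}` and `e_{2n} ↦ -(|a|²/2) e_n`, reflecting in `α` on the last block and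
fixing the other basis vectors. Conjugation by it therefore sends `f_{L_{n-1}-L_n}` to
`c f_{L_{n-1}+L_n}` and `f_{L_n-L_{n-1}}` to `c⁻¹ f_{-L_{n-1}-L_n}`, where `c = -|a|²/2`; being a
ring automorphism, it sends `w_{L_{n-1}-L_n}(t)` to `w_{L_{n-1}+L_n}(c t)`.
-/

section OuterProduct

variable {ι : Type*}

lemma vecMulVec_mul_vecMulVec_eq_smul [Fintype ι] (u v w x : ι → ℝ) :
    vecMulVec u v * vecMulVec w x = (v ⬝ᵥ w) • vecMulVec u x := by
  rw [vecMulVec_mul_vecMulVec, vecMulVec_smul]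

lemma sum_smul_vecMulVec_sub_vecMulVec {κ : Type*} [Fintype κ] (c : κ → ℝ) (u v : ι → ℝ)
    (w : κ → ι → ℝ) :
    ∑ k, c k • (vecMulVec u (w k) - vecMulVec (w k) v) =
      vecMulVec u (∑ k, c k • w k) - vecMulVec (∑ k, c k • w k) v := by
  ext p q
  simp only [Matrix.sum_apply, Matrix.smul_apply, Matrix.sub_apply, vecMulVec_apply,
    Finset.sum_apply, Pi.smul_apply, Finset.mul_sum, Finset.sum_mul, Finset.sum_sub_distrib,
    smul_eq_mul, mul_sub]
  congr 1 <;> exact Finset.sum_congr rfl fun k _ => by ring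

variable [Fintype ι] [DecidableEq ι]

/-- `x_{L}(α)` for the short root with coordinate vectors `u = e_i`, `v = e_{i+n}`. -/
def shortRootX (u v α : ι → ℝ) : Matrix ι ι ℝ :=
  1 + vecMulVec u α - vecMulVec α v - (α ⬝ᵥ α / 2) • vecMulVec u v

def shortWeyl (u v α : ι → ℝ) : Matrix ι ι ℝ :=
  1 - vecMulVec u u - vecMulVec v v - (α ⬝ᵥ α / 2) • vecMulVec u v
    - (2 / α ⬝ᵥ α) • vecMulVec v u - (2 / α ⬝ᵥ α) • vecMulVec α α

/- The frame `e` plays the role of `(e_{n-1}, e_n, e_{2n-1}, e_{2n})`, so that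
`E(e 0, e 1) - E(e 3, e 2)`, `E(e 1, e 0) - E(e 2, e 3)`, `E(e 0, e 3) - E(e 1, e 2)` and
`E(e 3, e 0) - E(e 2, e 1)` are `f_{L_{n-1}-L_n}`, `f_{L_n-L_{n-1}}`, `f_{L_{n-1}+L_n}` and
`f_{-L_{n-1}-L_n}`. -/
variable {e : Fin 4 → ι → ℝ} {α : ι → ℝ}

lemma shortRootX_mul_shortRootX_mul_shortRootX
    (he : ∀ i j, e i ⬝ᵥ e j = if i = j then 1 else 0) (hα : ∀ i, e i ⬝ᵥ α = 0)
    (hα0 : α ⬝ᵥ α ≠ 0) :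
    shortRootX (e 1) (e 3) α * shortRootX (e 3) (e 1) ((2 / α ⬝ᵥ α) • α) *
      shortRootX (e 1) (e 3) α = shortWeyl (e 1) (e 3) α := by
  have hα' : ∀ i, α ⬝ᵥ e i = 0 := fun i => by rw [dotProduct_comm, hα]
  simp only [shortRootX, shortWeyl, add_mul, mul_add, sub_mul, mul_sub, one_mul, mul_one,
    smul_mul_assoc, mul_smul_comm, vecMulVec_mul_vecMulVec_eq_smul, he, hα, hα',
    smul_vecMulVec, vecMulVec_smul, smul_dotProduct, dotProduct_smul, smul_eq_mul, smul_smul]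
  simp only [Fin.reduceEq, if_true, if_false, zero_smul, sub_zero, mul_zero]
  match_scalars <;> field_simp <;> ring

lemma shortWeyl_mul_self
    (he : ∀ i j, e i ⬝ᵥ e j = if i = j then 1 else 0) (hα : ∀ i, e i ⬝ᵥ α = 0)
    (hα0 : α ⬝ᵥ α ≠ 0) :
    shortWeyl (e 1) (e 3) α * shortWeyl (e 1) (e 3) α = 1 := by
  have hα' : ∀ i, α ⬝ᵥ e i = 0 := fun i => by rw [dotProduct_comm, hα]
  simp only [shortWeyl, sub_mul, mul_sub, one_mul, mul_one, smul_mul_assoc, mul_smul_comm,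
    vecMulVec_mul_vecMulVec_eq_smul, he, hα, hα', smul_smul, Fin.reduceEq, if_true, if_false,
    zero_smul, sub_zero]
  match_scalars <;> field_simp <;> ring

lemma shortWeyl_mul_diffRoot
    (he : ∀ i j, e i ⬝ᵥ e j = if i = j then 1 else 0) (hα : ∀ i, e i ⬝ᵥ α = 0)
    (hα0 : α ⬝ᵥ α ≠ 0) :
    shortWeyl (e 1) (e 3) α * (vecMulVec (e 0) (e 1) - vecMulVec (e 3) (e 2)) =
      (-(α ⬝ᵥ α / 2)) • (vecMulVec (e 0) (e 3) - vecMulVec (e 1) (e 2)) *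
        shortWeyl (e 1) (e 3) α := by
  have hα' : ∀ i, α ⬝ᵥ e i = 0 := fun i => by rw [dotProduct_comm, hα]
  simp only [shortWeyl, sub_mul, mul_sub, one_mul, mul_one, smul_mul_assoc, mul_smul_comm,
    vecMulVec_mul_vecMulVec_eq_smul, he, hα, hα', smul_smul, smul_sub, Fin.reduceEq, if_true,
    if_false, zero_smul, sub_zero]
  match_scalars <;> field_simp <;> ring

lemma shortWeyl_mul_negDiffRoot
    (he : ∀ i j, e i ⬝ᵥ e j = if i = j then 1 else 0) (hα : ∀ i, e i ⬝ᵥ α = 0)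
    (hα0 : α ⬝ᵥ α ≠ 0) :
    shortWeyl (e 1) (e 3) α * (vecMulVec (e 1) (e 0) - vecMulVec (e 2) (e 3)) =
      (-(α ⬝ᵥ α / 2))⁻¹ • (vecMulVec (e 3) (e 0) - vecMulVec (e 2) (e 1)) *
        shortWeyl (e 1) (e 3) α := by
  have hα' : ∀ i, α ⬝ᵥ e i = 0 := fun i => by rw [dotProduct_comm, hα]
  simp only [shortWeyl, sub_mul, mul_sub, one_mul, mul_one, smul_mul_assoc, mul_smul_comm,
    vecMulVec_mul_vecMulVec_eq_smul, he, hα, hα', smul_smul, smul_sub, Fin.reduceEq, if_true,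
    if_false, zero_smul, sub_zero]
  match_scalars <;> field_simp <;> ring

end OuterProduct

section Conjugation

variable {A : Type*} [Ring A] [Algebra ℝ A] {W f g f' g' : A} {c : ℝ}

lemma mul_one_add_smul_of_mul_eq (h : W * f = c • g * W) (t : ℝ) :
    W * (1 + t • f) = (1 + (c * t) • g) * W := by
  rw [mul_add, mul_one, mul_smul_comm, h, add_mul, one_mul, smul_mul_assoc, smul_mul_assoc,
    smul_smul, mul_comm]

lemma conj_one_add_smul_triple (hW : W * W = 1) (h : W * f = c • g * W)
    (h' : W * f' = c⁻¹ • g' * W) (t : ℝ) :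
    W * ((1 + t • f) * (1 + (-t⁻¹) • f') * (1 + t • f)) * W =
      (1 + (c * t) • g) * (1 + (-(c * t)⁻¹) • g') * (1 + (c * t) • g) := by
  have hinv : c⁻¹ * -t⁻¹ = -(c * t)⁻¹ := by rw [mul_inv]; ring
  have hx : ∀ Y, W * ((1 + t • f) * Y) = (1 + (c * t) • g) * (W * Y) := fun Y => by
    rw [← mul_assoc, mul_one_add_smul_of_mul_eq h, mul_assoc]
  have hx' : ∀ Y, W * ((1 + (-t⁻¹) • f') * Y) = (1 + (-(c * t)⁻¹) • g') * (W * Y) := fun Y => by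
    rw [← mul_assoc, mul_one_add_smul_of_mul_eq h', mul_assoc, hinv]
  simp only [mul_assoc, hx, hx', hW, mul_one]

end Conjugation

/-- The standard basis vector `e_k` of `ℝ^N` with the 1-based index of `Estd`; it is `0` when
`k ∉ [1, N]`. -/
def unitVec (N k : ℕ) : Fin N → ℝ := fun p => if p.val + 1 = k then 1 else 0

lemma Estd_eq_vecMulVec (N k l : ℕ) : Estd N k l = vecMulVec (unitVec N k) (unitVec N l) := by
  ext p q
  simp only [Estd, unitVec, of_apply, vecMulVec_apply, ite_zero_mul_ite_zero, mul_one]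

lemma unitVec_dotProduct_unitVec (N k l : ℕ) :
    unitVec N k ⬝ᵥ unitVec N l = if k = l ∧ 1 ≤ k ∧ k ≤ N then 1 else 0 := by
  by_cases hk : 1 ≤ k ∧ k ≤ N
  · have hsingle : unitVec N k = Pi.single ⟨k - 1, by omega⟩ 1 := by
      ext p
      simp only [unitVec, Pi.single_apply, Fin.ext_iff]
      exact if_congr (by omega) rfl rfl
    rw [hsingle, single_dotProduct, one_mul]
    simp only [unitVec]
    exact if_congr (by omega) rfl rfl
  · have hzero : unitVec N k = 0 := funext fun p => if_neg (by omega)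
    rw [hzero, zero_dotProduct, if_neg (by omega)]

def tailVec (m n : ℕ) (a : Fin (m - n) → ℝ) : Fin (m + n) → ℝ :=
  ∑ ℓ, a ℓ • unitVec (m + n) (2 * n + (ℓ.val + 1))

lemma tailVec_smul (m n : ℕ) (c : ℝ) (a : Fin (m - n) → ℝ) :
    tailVec m n (c • a) = c • tailVec m n a := by
  simp only [tailVec, Pi.smul_apply, smul_eq_mul, Finset.smul_sum, smul_smul]

lemma unitVec_dotProduct_tailVec {m n k : ℕ} (hk : k ≤ 2 * n) (a : Fin (m - n) → ℝ) :
    unitVec (m + n) k ⬝ᵥ tailVec m n a = 0 := by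
  simp only [tailVec, dotProduct_sum, dotProduct_smul, unitVec_dotProduct_unitVec]
  exact Finset.sum_eq_zero fun ℓ _ => by rw [if_neg (by omega), smul_zero]

lemma tailVec_dotProduct_tailVec (m n : ℕ) (a : Fin (m - n) → ℝ) :
    tailVec m n a ⬝ᵥ tailVec m n a = sqnorm (m - n) a := by
  have horth : ∀ ℓ ℓ' : Fin (m - n), unitVec (m + n) (2 * n + (ℓ.val + 1)) ⬝ᵥ
      unitVec (m + n) (2 * n + (ℓ'.val + 1)) = if ℓ = ℓ' then 1 else 0 := fun ℓ ℓ' => by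
    rw [unitVec_dotProduct_unitVec]
    exact if_congr (by rw [Fin.ext_iff]; omega) rfl rfl
  simp only [tailVec, dotProduct_sum, sum_dotProduct, dotProduct_smul, smul_dotProduct, horth,
    smul_eq_mul, mul_ite, mul_one, mul_zero, Finset.sum_ite_eq', Finset.mem_univ, if_true,
    sqnorm, sq]

lemma sqnorm_ne_zero {d : ℕ} {a : Fin d → ℝ} (ha : a ≠ 0) : sqnorm d a ≠ 0 := by
  have hdot : sqnorm d a = a ⬝ᵥ a := by simp only [sqnorm, dotProduct, sq]
  rwa [hdot, Ne, dotProduct_self_eq_zero]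

lemma xL_eq_shortRootX (m n i : ℕ) (a : Fin (m - n) → ℝ) :
    xL m n i a = shortRootX (unitVec (m + n) i) (unitVec (m + n) (i + n)) (tailVec m n a) := by
  simp only [xL, fL, shortRootX, Estd_eq_vecMulVec, sum_smul_vecMulVec_sub_vecMulVec,
    tailVec_dotProduct_tailVec, add_sub_assoc]
  rfl

lemma xnegL_eq_shortRootX (m n i : ℕ) (a : Fin (m - n) → ℝ) :
    xnegL m n i a = shortRootX (unitVec (m + n) (i + n)) (unitVec (m + n) i) (tailVec m n a) := by
  simp only [xnegL, fnegL, shortRootX, Estd_eq_vecMulVec, sum_smul_vecMulVec_sub_vecMulVec,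
    tailVec_dotProduct_tailVec, add_sub_assoc]
  rfl

def weylFrame (m n : ℕ) : Fin 4 → Fin (m + n) → ℝ :=
  ![unitVec (m + n) (n - 1), unitVec (m + n) n, unitVec (m + n) (n - 1 + n),
    unitVec (m + n) (n + n)]

lemma weylFrame_dotProduct {m n : ℕ} (hn : 2 ≤ n) (hnm : n ≤ m) (i j : Fin 4) :
    weylFrame m n i ⬝ᵥ weylFrame m n j = if i = j then 1 else 0 := by
  fin_cases i <;> fin_cases j <;>
    simp only [weylFrame, unitVec_dotProduct_unitVec, Fin.isValue, Fin.zero_eta, Fin.mk_one,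
      Fin.reduceFinMk, cons_val, if_true, if_false, Fin.reduceEq, true_and] <;>
    split_ifs <;> first | rfl | omega

lemma weylFrame_dotProduct_tailVec {m n : ℕ} (a : Fin (m - n) → ℝ) (i : Fin 4) :
    weylFrame m n i ⬝ᵥ tailVec m n a = 0 := by
  fin_cases i <;> exact unitVec_dotProduct_tailVec (by omega) a

lemma wL_eq_shortWeyl {m n : ℕ} (hn : 2 ≤ n) (hnm : n ≤ m) {a : Fin (m - n) → ℝ} (ha : a ≠ 0) :
    wL m n n a = shortWeyl (weylFrame m n 1) (weylFrame m n 3) (tailVec m n a) := by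
  have key := shortRootX_mul_shortRootX_mul_shortRootX (weylFrame_dotProduct hn hnm)
    (weylFrame_dotProduct_tailVec a) (by rw [tailVec_dotProduct_tailVec]; exact sqnorm_ne_zero ha)
  simp only [weylFrame, cons_val] at key ⊢
  rw [wL, xL_eq_shortRootX, xnegL_eq_shortRootX, tailVec_smul, ← tailVec_dotProduct_tailVec, key]

theorem wL_conj_wdiff_general (m n : ℕ) (hmn : n + 1 ≤ m) (hn : 2 ≤ n)
    (a : Fin (m - n) → ℝ) (ha : a ≠ 0) (t : ℝ) :
    wL m n n a * wdiff m n (n - 1) n t * (wL m n n a)⁻¹ =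
      wplus m n (n - 1) n (-(sqnorm (m - n) a / 2) * t) := by
  have hnm : n ≤ m := by omega
  have he := weylFrame_dotProduct hn hnm
  have hα := weylFrame_dotProduct_tailVec a
  have hs : tailVec m n a ⬝ᵥ tailVec m n a ≠ 0 := by
    rw [tailVec_dotProduct_tailVec]
    exact sqnorm_ne_zero ha
  have hWW := shortWeyl_mul_self he hα hs
  have hconj := conj_one_add_smul_triple hWW (shortWeyl_mul_diffRoot he hα hs)
    (shortWeyl_mul_negDiffRoot he hα hs) t
  rw [wL_eq_shortWeyl hn hnm ha, inv_eq_right_inv hWW, ← tailVec_dotProduct_tailVec]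
  simp only [weylFrame, cons_val] at hconj ⊢
  simpa only [wdiff, xdiff, wplus, xplus, xnegplus, fdiff, fplus, fnegplus, Estd_eq_vecMulVec]
    using hconj

/-- **Item 1 of Lemma 6.4 of the paper, in `SO⁺(m,n)`**:
`w_{L_n}(a) · w_{L_{n−1}−L_n}(t) · w_{L_n}(a)⁻¹ = w_{L_{n−1}+L_n}(−(|a|²/2)·t)`. -/
theorem wL_conj_wdiff (m n : ℕ) (hmn : n + 1 ≤ m) (hn : 2 ≤ n)
    (a : Fin (m - n) → ℝ) (ha : a ≠ 0) (t : ℝ) (ht : t ≠ 0) :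
    wL m n n a * wdiff m n (n - 1) n t * (wL m n n a)⁻¹ =
      wplus m n (n - 1) n (-(sqnorm (m - n) a / 2) * t) :=
  wL_conj_wdiff_general m n hmn hn a ha t
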